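/- arXiv:1405.7107 — 4 statements merged into one kernel-verified Lean document; each statement's English description precedes it below -/
import Mathlib

section
/- Let a > 0 and let f, g ∈ L¹(0,∞) ∩ L²(0,∞), and let q(t) = ∫_0^t g(t−τ) f(τ) dτ be their Laplace convolution. Then for every integer k ≥ 0 the Laguerre coefficients satisfy q^{(k)} = (2a)^{−1/2} [ g^{(0)} f^{(k)} + ∑_{ℓ=0}^{k−1} (g^{(k−ℓ)} − g^{(k−ℓ−1)}) f^{(ℓ)} ]. Equivalently, for every m ≥ 1, q_m = G_m f_m, where q_m = (q^{(0)},…,q^{(m−1)})ᵀ, f_m = (f^{(0)},…,f^{(m−1)})ᵀ, and G_m is the m×m lower triangular Toeplitz matrix whose first column is (g^{(0)}, g^{(1)}−g^{(0)}, …, g^{(m−1)}−g^{(m−2)})ᵀ/√(2a). -/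
open MeasureTheory Matrix Finset Filter Topology

noncomputable section

namespace LapDeconv

/-- Laguerre polynomial `L_k(t) = ∑_{j=0}^k (-1)^j (k choose j) t^j / j!`. -/
def laguerreL (k : ℕ) (t : ℝ) : ℝ :=
  ∑ j ∈ Finset.range (k + 1), (-1 : ℝ) ^ j * (k.choose j : ℝ) * t ^ j / (Nat.factorial j : ℝ)

/-- Laguerre function `φ_k(t) = √(2a) e^{-at} L_k(2at)`. -/
def lagFun (a : ℝ) (k : ℕ) (t : ℝ) : ℝ :=
  Real.sqrt (2 * a) * Real.exp (-(a * t)) * laguerreL k (2 * a * t)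

/-- Laguerre coefficient `h^{(k)} = ∫_0^∞ h(t) φ_k(t) dt`. -/
def lagCoeff (a : ℝ) (h : ℝ → ℝ) (k : ℕ) : ℝ :=
  ∫ t in Set.Ioi (0 : ℝ), h t * lagFun a k t

/-- Laplace convolution `q(t) = ∫_0^t g(t-τ) f(τ) dτ`. -/
def conv (g f : ℝ → ℝ) (t : ℝ) : ℝ := ∫ τ in (0 : ℝ)..t, g (t - τ) * f τ

/-- Squared L²(0,∞) distance between two functions. -/
def distSq (u v : ℝ → ℝ) : ℝ := ∫ x in Set.Ioi (0 : ℝ), (u x - v x) ^ 2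

/-- The design matrix `Φ_M` with entries `φ_k(t_i)`. -/
def PhiMat (a : ℝ) {n : ℕ} (M : ℕ) (t : Fin n → ℝ) : Matrix (Fin n) (Fin M) ℝ :=
  Matrix.of fun i k => lagFun a (k : ℕ) (t i)

/-- First column of the Toeplitz matrix `G_m`. -/
def toepCol (a : ℝ) (g : ℝ → ℝ) (k : ℕ) : ℝ :=
  (if k = 0 then lagCoeff a g 0 else lagCoeff a g k - lagCoeff a g (k - 1)) / Real.sqrt (2 * a)

/-- The lower triangular Toeplitz matrix `G_m`. -/
def Gmat (a : ℝ) (g : ℝ → ℝ) (m : ℕ) : Matrix (Fin m) (Fin m) ℝ :=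
  Matrix.of fun i j => if (j : ℕ) ≤ (i : ℕ) then toepCol a g ((i : ℕ) - (j : ℕ)) else 0

/-- The truncation matrix `J_{m,M} = (Id_m 0)`. -/
def Jmat (m M : ℕ) : Matrix (Fin m) (Fin M) ℝ :=
  Matrix.of fun i j => if (j : ℕ) = (i : ℕ) then 1 else 0

/-- Upper-left `m × m` block of an `M × M` matrix. -/
def topLeft {M : ℕ} (B : Matrix (Fin M) (Fin M) ℝ) (m : ℕ) : Matrix (Fin m) (Fin m) ℝ :=
  Matrix.of fun i j =>
    if h : (i : ℕ) < M ∧ (j : ℕ) < M then B ⟨(i : ℕ), h.1⟩ ⟨(j : ℕ), h.2⟩ else 0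

/-- `Q_m = (n/T) [(Φᵀ Φ)⁻¹]_m ([G_M G_Mᵀ]_m)⁻¹`. -/
def Qmat (a : ℝ) {n : ℕ} (M : ℕ) (t : Fin n → ℝ) (T : ℝ) (g : ℝ → ℝ) (m : ℕ) :
    Matrix (Fin m) (Fin m) ℝ :=
  ((n : ℝ) / T) • (topLeft ((PhiMat a M t)ᵀ * PhiMat a M t)⁻¹ m *
    (topLeft (Gmat a g M * (Gmat a g M)ᵀ) m)⁻¹)

/-- `A_m = √(n/T) G_m⁻¹ J_{m,M} (Φᵀ Φ)⁻¹ Φᵀ`. -/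
def Amat (a : ℝ) {n : ℕ} (M : ℕ) (t : Fin n → ℝ) (T : ℝ) (g : ℝ → ℝ) (m : ℕ) :
    Matrix (Fin m) (Fin n) ℝ :=
  Real.sqrt ((n : ℝ) / T) •
    ((Gmat a g m)⁻¹ * Jmat m M * ((PhiMat a M t)ᵀ * PhiMat a M t)⁻¹ * (PhiMat a M t)ᵀ)

/-- Squared Frobenius norm `‖B‖_F² = Tr(Bᵀ B)`. -/
def frobSq {k l : ℕ} (B : Matrix (Fin k) (Fin l) ℝ) : ℝ := Matrix.trace (Bᵀ * B)

/-- Largest eigenvalue of a symmetric matrix, as the supremum of its Rayleigh quotient over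
unit vectors. -/
def lambdaMax {N : ℕ} (B : Matrix (Fin N) (Fin N) ℝ) : ℝ :=
  sSup {r : ℝ | ∃ v : Fin N → ℝ, (∑ i, v i ^ 2) = 1 ∧ r = v ⬝ᵥ B.mulVec v}

/-- `v_m² = ‖A_m‖_F²`. -/
def vSq (a : ℝ) {n : ℕ} (M : ℕ) (t : Fin n → ℝ) (T : ℝ) (g : ℝ → ℝ) (m : ℕ) : ℝ :=
  frobSq (Amat a M t T g m)

/-- `ρ_m² = λ_max(A_mᵀ A_m)`. -/
def rhoSq (a : ℝ) {n : ℕ} (M : ℕ) (t : Fin n → ℝ) (T : ℝ) (g : ℝ → ℝ) (m : ℕ) : ℝ :=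
  lambdaMax ((Amat a M t T g m)ᵀ * Amat a M t T g m)

/-- The penalty `pen(m) = 8σ²(T/n)[v_m² + 2κ ρ_m² log(m ρ_m/ρ₁)]`. -/
def pen (a : ℝ) {n : ℕ} (M : ℕ) (t : Fin n → ℝ) (T σ κ : ℝ) (g : ℝ → ℝ) (m : ℕ) : ℝ :=
  8 * σ ^ 2 * (T / n) * (vSq a M t T g m +
    2 * κ * rhoSq a M t T g m *
      Real.log ((m : ℝ) * Real.sqrt (rhoSq a M t T g m) / Real.sqrt (rhoSq a M t T g 1)))

/-- `τ(m,m') = 2(T/n)[v²_{m*} + 2κ ρ²_{m*} log(m* ρ_{m*}/ρ₁)]`, `m* = m ∨ m'`. -/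
def tau (a : ℝ) {n : ℕ} (M : ℕ) (t : Fin n → ℝ) (T κ : ℝ) (g : ℝ → ℝ) (m m' : ℕ) : ℝ :=
  2 * (T / n) * (vSq a M t T g (max m m') +
    2 * κ * rhoSq a M t T g (max m m') *
      Real.log (((max m m' : ℕ) : ℝ) * Real.sqrt (rhoSq a M t T g (max m m')) /
        Real.sqrt (rhoSq a M t T g 1)))

/-- Coefficient vector of the estimator, `f̂_m = G_m⁻¹ J_{m,M} (ΦᵀΦ)⁻¹ Φᵀ y`. -/
def fhatCoef (a : ℝ) {n : ℕ} (M : ℕ) (t : Fin n → ℝ) (g : ℝ → ℝ) (m : ℕ)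
    (y : Fin n → ℝ) : Fin m → ℝ :=
  ((Gmat a g m)⁻¹ * Jmat m M * ((PhiMat a M t)ᵀ * PhiMat a M t)⁻¹ *
    (PhiMat a M t)ᵀ).mulVec y

/-- The estimator `f̂_m(x) = ∑_{k<m} (f̂_m)_k φ_k(x)`. -/
def fhatFun (a : ℝ) {n : ℕ} (M : ℕ) (t : Fin n → ℝ) (g : ℝ → ℝ) (m : ℕ)
    (y : Fin n → ℝ) (x : ℝ) : ℝ :=
  ∑ k : Fin m, fhatCoef a M t g m y k * lagFun a (k : ℕ) x

/-- The projection `f_m = ∑_{k<m} f^{(k)} φ_k`. -/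
def projFun (a : ℝ) (f : ℝ → ℝ) (m : ℕ) (x : ℝ) : ℝ :=
  ∑ k ∈ Finset.range m, lagCoeff a f k * lagFun a k x

/-- The model-selection criterion `-‖f̂_m‖² + pen(m)`. -/
def crit (a : ℝ) {n : ℕ} (M : ℕ) (t : Fin n → ℝ) (T σ κ : ℝ) (g : ℝ → ℝ) (m : ℕ)
    (y : Fin n → ℝ) : ℝ :=
  -(∑ k : Fin m, fhatCoef a M t g m y k ^ 2) + pen a M t T σ κ g m

/-- `sup_{t ∈ S_m, ‖t‖ = 1} ⟨t, G_M⁻¹ (ΦᵀΦ)⁻¹ Φᵀ e⟩²`, where `S_m ⊆ ℝ^M` is the subspace of`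
vectors with coordinates of index `≥ m` vanishing. -/
def supTerm (a : ℝ) {n : ℕ} (M : ℕ) (t : Fin n → ℝ) (g : ℝ → ℝ) (m : ℕ)
    (e : Fin n → ℝ) : ℝ :=
  sSup {r : ℝ | ∃ v : Fin M → ℝ, (∀ j : Fin M, m ≤ (j : ℕ) → v j = 0) ∧
    (∑ j, v j ^ 2) = 1 ∧
    r = (v ⬝ᵥ ((Gmat a g M)⁻¹ * ((PhiMat a M t)ᵀ * PhiMat a M t)⁻¹ *
          (PhiMat a M t)ᵀ).mulVec e) ^ 2}

end LapDeconv

/-!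
Put `x = 2as`, `y = 2aτ`. Comparing coefficients of `x^p y^q`, the upper Vandermonde identity
`∑_{l<n} C(l,q) C(n-1-l,r) = C(n,q+r+1)` gives the addition formula
`L_k(x+y) = ∑_{l≤k} L_l(y) L_{k-l}(x) - ∑_{l<k} L_l(y) L_{k-1-l}(x)`,
hence `√(2a) φ_k(s+τ) = ∑_{l≤k} φ_l(τ) φ_{k-l}(s) - ∑_{l<k} φ_l(τ) φ_{k-1-l}(s)`.
The `φ_k` are bounded on `[0,∞)`, so Fubini applies to the convolution and
`q^{(k)} = ∫_0^∞ f(τ) ∫_0^∞ g(s) φ_k(s+τ) ds dτ`. Inserting the addition formula shows that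
`√(2a) q^{(k)} = c_k - c_{k-1}` for the Cauchy product `c_k = ∑_{l≤k} g^{(k-l)} f^{(l)}`; both forms
of the statement are rearrangements of this first difference.
-/

open scoped Nat

theorem Nat.sum_antidiagonal_choose_mul_choose (m q r : ℕ) :
    ∑ ij ∈ antidiagonal m, ij.1.choose q * ij.2.choose r = (m + 1).choose (q + r + 1) := by
  induction m generalizing q r with
  | zero => rcases q with _ | q <;> rcases r with _ | r <;> simp [Nat.choose_eq_zero_of_lt]
  | succ m ih =>
    rcases q with _ | q
    · rcases r with _ | r
      · simp
      · conv_lhs => simp only [Nat.sum_antidiagonal_succ', Nat.choose_succ_succ',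
          Nat.choose_zero_succ, mul_zero, zero_add, mul_add, sum_add_distrib]
        rw [ih, ih, zero_add, zero_add, Nat.choose_succ_succ' (m + 1)]
    · conv_lhs => simp only [Nat.sum_antidiagonal_succ, Nat.choose_succ_succ',
        Nat.choose_zero_succ, zero_mul, zero_add, add_mul, sum_add_distrib]
      rw [ih, ih, Nat.add_right_comm q 1, Nat.choose_succ_succ' (m + 1)]

theorem Nat.sum_range_choose_mul_choose (n q r : ℕ) :
    ∑ l ∈ range n, l.choose q * (n - 1 - l).choose r = n.choose (q + r + 1) := by
  rcases n with _ | m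
  · simp
  · simpa using
      (Nat.sum_antidiagonal_eq_sum_range_succ (fun i j => i.choose q * j.choose r) m).symm.trans
        (Nat.sum_antidiagonal_choose_mul_choose m q r)

theorem Finset.sum_range_diag_eq_sum_range_sum_range {M : Type*} [AddCommMonoid M] {N : ℕ}
    (F : ℕ → ℕ → M) (hF : ∀ p q, N < p + q → F p q = 0) :
    ∑ n ∈ range (N + 1), ∑ p ∈ range (n + 1), F p (n - p) =
      ∑ p ∈ range (N + 1), ∑ q ∈ range (N + 1), F p q := by
  rw [sum_range_diag_flip]
  refine sum_congr rfl fun p _ => sum_subset (range_subset_range.2 (by omega)) fun q _ hq => ?_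
  exact hF p q (by simp only [mem_range] at hq; omega)

theorem add_pow_div_factorial {K : Type*} [Field K] [CharZero K] (x y : K) (n : ℕ) :
    (x + y) ^ n / n ! = ∑ p ∈ range (n + 1), x ^ p / p ! * (y ^ (n - p) / (n - p)!) := by
  rw [add_pow, sum_div]
  refine sum_congr rfl fun p hp => ?_
  have hn : (n ! : K) ≠ 0 := Nat.cast_ne_zero.2 n.factorial_ne_zero
  rw [Nat.cast_choose K (Nat.lt_succ_iff.1 (mem_range.1 hp))]
  field_simp

theorem Finset.sum_range_mul_sub_sum_range_mul {R : Type*} [CommRing R] (u v : ℕ → R) (k : ℕ) :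
    ∑ l ∈ range (k + 1), u (k - l) * v l - ∑ l ∈ range k, u (k - 1 - l) * v l =
      u 0 * v k + ∑ l ∈ range k, (u (k - l) - u (k - l - 1)) * v l := by
  simp only [sum_range_succ, Nat.sub_self, sub_mul, sum_sub_distrib, Nat.sub_right_comm k 1]
  ring

theorem MeasureTheory.integral_convolution_mul_eq {G : Type*} [AddGroup G] [MeasurableSpace G]
    [MeasurableAdd₂ G] [MeasurableNeg G] {μ : Measure G} [SFinite μ] [μ.IsAddRightInvariant]
    {f g ψ : G → ℝ} (hf : Integrable f μ) (hg : Integrable g μ) (hψ : AEStronglyMeasurable ψ μ)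
    {C : ℝ} (hψC : ∀ t, ‖ψ t‖ ≤ C) :
    ∫ t, (∫ τ, g (t - τ) * f τ ∂μ) * ψ t ∂μ = ∫ τ, f τ * ∫ s, g s * ψ (s + τ) ∂μ ∂μ := by
  have hint : Integrable (Function.uncurry fun t τ => g (t - τ) * f τ * ψ t) (μ.prod μ) := by
    refine ((hf.convolution_integrand (ContinuousLinearMap.mul ℝ ℝ) hg).mul_bdd hψ.comp_fst
      (Eventually.of_forall fun p => hψC p.1)).congr (Eventually.of_forall fun p => ?_)
    simp [Function.uncurry, mul_comm]
  calc ∫ t, (∫ τ, g (t - τ) * f τ ∂μ) * ψ t ∂μ = ∫ t, ∫ τ, g (t - τ) * f τ * ψ t ∂μ ∂μ := by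
        simp_rw [integral_mul_const]
    _ = ∫ τ, ∫ t, g (t - τ) * f τ * ψ t ∂μ ∂μ := integral_integral_swap hint
    _ = ∫ τ, f τ * ∫ s, g s * ψ (s + τ) ∂μ ∂μ := by
        refine integral_congr_ae (Eventually.of_forall fun τ => ?_)
        dsimp only
        rw [← integral_const_mul, ← integral_add_right_eq_self _ τ]
        simp only [add_sub_cancel_right]
        exact integral_congr_ae (Eventually.of_forall fun t => by simp only; ring)

namespace LapDeconv

theorem laguerreL_eq_sum_range {k N : ℕ} (h : k ≤ N) (x : ℝ) :
    laguerreL k x = ∑ j ∈ range (N + 1), (-1) ^ j * (k.choose j : ℝ) * x ^ j / j ! := by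
  refine sum_subset (range_subset_range.2 (by omega)) fun j _ hj => ?_
  rw [Nat.choose_eq_zero_of_lt (by simpa using hj)]
  simp

theorem laguerreL_add_eq_sum {k N : ℕ} (h : k ≤ N) (x y : ℝ) :
    laguerreL k (x + y) = ∑ p ∈ range (N + 1), ∑ q ∈ range (N + 1),
      (k.choose (p + q) : ℝ) * ((-1) ^ (p + q) * x ^ p / p ! * (y ^ q / q !)) := by
  rw [← sum_range_diag_eq_sum_range_sum_range _ fun p q hpq => by
    rw [Nat.choose_eq_zero_of_lt (by omega), Nat.cast_zero, zero_mul], laguerreL_eq_sum_range h]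
  refine sum_congr rfl fun j _ => ?_
  rw [mul_div_assoc, add_pow_div_factorial, mul_sum]
  refine sum_congr rfl fun p hp => ?_
  rw [Nat.add_sub_cancel' (Nat.lt_succ_iff.1 (mem_range.1 hp))]
  ring

theorem sum_range_laguerreL_mul_laguerreL {n N : ℕ} (h : n ≤ N + 1) (x y : ℝ) :
    ∑ l ∈ range n, laguerreL l y * laguerreL (n - 1 - l) x =
      ∑ p ∈ range (N + 1), ∑ q ∈ range (N + 1),
        (n.choose (p + q + 1) : ℝ) * ((-1) ^ (p + q) * x ^ p / p ! * (y ^ q / q !)) := by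
  calc ∑ l ∈ range n, laguerreL l y * laguerreL (n - 1 - l) x
      = ∑ l ∈ range n, ∑ p ∈ range (N + 1), ∑ q ∈ range (N + 1),
          ((l.choose q * (n - 1 - l).choose p : ℕ) : ℝ) *
            ((-1) ^ (p + q) * x ^ p / p ! * (y ^ q / q !)) := by
        refine sum_congr rfl fun l hl => ?_
        have hl := mem_range.1 hl
        rw [mul_comm, laguerreL_eq_sum_range (N := N) (by omega),
          laguerreL_eq_sum_range (N := N) (by omega), sum_mul_sum]
        refine sum_congr rfl fun p _ => sum_congr rfl fun q _ => ?_
        push_cast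
        ring
    _ = ∑ p ∈ range (N + 1), ∑ q ∈ range (N + 1), ∑ l ∈ range n,
          ((l.choose q * (n - 1 - l).choose p : ℕ) : ℝ) *
            ((-1) ^ (p + q) * x ^ p / p ! * (y ^ q / q !)) := by
        rw [sum_comm]
        exact sum_congr rfl fun p _ => sum_comm
    _ = _ := by
        refine sum_congr rfl fun p _ => sum_congr rfl fun q _ => ?_
        rw [← sum_mul, ← Nat.cast_sum, Nat.sum_range_choose_mul_choose, add_comm q p]

theorem laguerreL_add (k : ℕ) (x y : ℝ) :
    laguerreL k (x + y) = ∑ l ∈ range (k + 1), laguerreL l y * laguerreL (k - l) x -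
      ∑ l ∈ range k, laguerreL l y * laguerreL (k - 1 - l) x := by
  have hsucc := sum_range_laguerreL_mul_laguerreL (n := k + 1) (N := k) le_rfl x y
  simp only [Nat.add_sub_cancel] at hsucc
  rw [hsucc, sum_range_laguerreL_mul_laguerreL (N := k) (by omega), laguerreL_add_eq_sum le_rfl,
    ← sum_sub_distrib]
  refine sum_congr rfl fun p _ => ?_
  rw [← sum_sub_distrib]
  refine sum_congr rfl fun q _ => ?_
  rw [Nat.choose_succ_succ' k (p + q)]
  push_cast
  ring

theorem abs_laguerreL_le (k : ℕ) {x : ℝ} (hx : 0 ≤ x) :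
    |laguerreL k x| ≤ 3 ^ k * Real.exp (x / 2) := by
  have h3 : (3 : ℝ) ^ k = ∑ j ∈ range (k + 1), 2 ^ j * 1 ^ (k - j) * (k.choose j : ℝ) := by
    rw [← add_pow]; norm_num
  calc |laguerreL k x|
      ≤ ∑ j ∈ range (k + 1), (k.choose j : ℝ) * (2 ^ j * ((x / 2) ^ j / j !)) := by
        refine (abs_sum_le_sum_abs _ _).trans (sum_le_sum fun j _ => le_of_eq ?_)
        rw [abs_div, abs_mul, abs_mul, abs_pow, abs_neg, abs_one, one_pow, one_mul, Nat.abs_cast,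
          Nat.abs_cast, abs_of_nonneg (pow_nonneg hx j), div_pow]
        field_simp
    _ ≤ ∑ j ∈ range (k + 1), (k.choose j : ℝ) * (2 ^ j * Real.exp (x / 2)) := by
        gcongr
        exact Real.pow_div_factorial_le_exp _ (by positivity) _
    _ = 3 ^ k * Real.exp (x / 2) := by
        rw [h3, sum_mul]
        exact sum_congr rfl fun j _ => by ring

theorem abs_lagFun_le {a t : ℝ} (ha : 0 ≤ a) (ht : 0 ≤ t) (k : ℕ) :
    |lagFun a k t| ≤ Real.sqrt (2 * a) * 3 ^ k := by
  have hexp : Real.exp (-(a * t)) * Real.exp (2 * a * t / 2) = 1 := by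
    rw [← Real.exp_add, ← Real.exp_zero]; ring_nf
  rw [lagFun, abs_mul, abs_mul, abs_of_nonneg (Real.sqrt_nonneg _), abs_of_pos (Real.exp_pos _)]
  calc Real.sqrt (2 * a) * Real.exp (-(a * t)) * |laguerreL k (2 * a * t)|
      ≤ Real.sqrt (2 * a) * Real.exp (-(a * t)) * (3 ^ k * Real.exp (2 * a * t / 2)) := by
        gcongr
        exact abs_laguerreL_le k (by positivity)
    _ = Real.sqrt (2 * a) * 3 ^ k := by linear_combination (Real.sqrt (2 * a) * 3 ^ k) * hexp

theorem continuous_lagFun (a : ℝ) (k : ℕ) : Continuous (lagFun a k) := by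
  unfold lagFun laguerreL
  fun_prop

theorem lagFun_add (a : ℝ) (k : ℕ) (s τ : ℝ) :
    lagFun a k (s + τ) = (Real.sqrt (2 * a))⁻¹ *
      (∑ l ∈ range (k + 1), lagFun a l τ * lagFun a (k - l) s -
        ∑ l ∈ range k, lagFun a l τ * lagFun a (k - 1 - l) s) := by
  have hprod : ∀ i j, lagFun a i τ * lagFun a j s = Real.sqrt (2 * a) *
      (Real.sqrt (2 * a) * Real.exp (-(a * (s + τ))) *
        (laguerreL i (2 * a * τ) * laguerreL j (2 * a * s))) := by
    intro i j
    rw [lagFun, lagFun, mul_add, neg_add, Real.exp_add]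
    ring
  rcases (Real.sqrt_nonneg (2 * a)).eq_or_lt with h0 | hpos
  · -- `a ≤ 0`: both sides vanish, the right one because `0⁻¹ = 0`
    simp [lagFun, ← h0]
  simp only [hprod, ← mul_sum, ← mul_sub, inv_mul_cancel_left₀ hpos.ne']
  rw [lagFun, mul_add (2 * a), laguerreL_add]

theorem conv_eq_integral_indicator (g f : ℝ → ℝ) {t : ℝ} (ht : 0 ≤ t) :
    conv g f t = ∫ τ, (Set.Ioi 0).indicator g (t - τ) * (Set.Ioi 0).indicator f τ := by
  rw [conv, intervalIntegral.integral_of_le ht, integral_Ioc_eq_integral_Ioo,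
    ← integral_indicator measurableSet_Ioo]
  refine integral_congr_ae (Eventually.of_forall fun τ => ?_)
  by_cases h0 : 0 < τ <;> by_cases h1 : τ < t <;>
    simp [h0, h1, sub_pos]

theorem integral_Ioi_conv_mul {f g ψ : ℝ → ℝ} (hf : IntegrableOn f (Set.Ioi 0))
    (hg : IntegrableOn g (Set.Ioi 0)) (hψ : AEStronglyMeasurable ψ (volume.restrict (Set.Ioi 0)))
    {C : ℝ} (hψC : ∀ t ∈ Set.Ioi 0, ‖ψ t‖ ≤ C) :
    ∫ t in Set.Ioi 0, conv g f t * ψ t =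
      ∫ τ in Set.Ioi 0, f τ * ∫ s in Set.Ioi 0, g s * ψ (s + τ) := by
  have hC : 0 ≤ C := (norm_nonneg _).trans (hψC 1 (Set.mem_Ioi.2 one_pos))
  have hψ₀C : ∀ t, ‖(Set.Ioi 0).indicator ψ t‖ ≤ C := fun t => by
    by_cases ht : t ∈ Set.Ioi 0
    · simpa [ht] using hψC t ht
    · simpa [ht] using hC
  rw [← integral_indicator measurableSet_Ioi, ← integral_indicator measurableSet_Ioi]
  calc ∫ t, (Set.Ioi 0).indicator (fun t => conv g f t * ψ t) t
      = ∫ t, (∫ τ, (Set.Ioi 0).indicator g (t - τ) * (Set.Ioi 0).indicator f τ) *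
          (Set.Ioi 0).indicator ψ t := by
        refine integral_congr_ae (Eventually.of_forall fun t => ?_)
        by_cases ht : t ∈ Set.Ioi 0
        · simp [ht, conv_eq_integral_indicator g f (le_of_lt ht)]
        · simp [ht]
    _ = ∫ τ, (Set.Ioi 0).indicator f τ *
          ∫ s, (Set.Ioi 0).indicator g s * (Set.Ioi 0).indicator ψ (s + τ) :=
        integral_convolution_mul_eq ((integrable_indicator_iff measurableSet_Ioi).2 hf)
          ((integrable_indicator_iff measurableSet_Ioi).2 hg)
          ((aestronglyMeasurable_indicator_iff measurableSet_Ioi).2 hψ) hψ₀C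
    _ = _ := by
        refine integral_congr_ae (Eventually.of_forall fun τ => ?_)
        by_cases hτ : τ ∈ Set.Ioi 0
        · simp only [Set.indicator_of_mem hτ]
          rw [← integral_indicator measurableSet_Ioi]
          congr 1
          refine integral_congr_ae (Eventually.of_forall fun s => ?_)
          by_cases hs : s ∈ Set.Ioi 0
          · have hsτ : s + τ ∈ Set.Ioi 0 := Set.mem_Ioi.2 (add_pos hs hτ)
            simp [hs, hsτ]
          · simp [hs]
        · simp [hτ]

theorem integrableOn_mul_lagFun {a : ℝ} (ha : 0 ≤ a) {h : ℝ → ℝ}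
    (hh : IntegrableOn h (Set.Ioi 0)) (k : ℕ) :
    IntegrableOn (fun t => h t * lagFun a k t) (Set.Ioi 0) :=
  hh.mul_bdd (continuous_lagFun a k).aestronglyMeasurable
    (ae_restrict_of_forall_mem measurableSet_Ioi fun _ ht => abs_lagFun_le ha (le_of_lt ht) k)

theorem integrableOn_mul_sum_lagFun {a : ℝ} (ha : 0 ≤ a) {h : ℝ → ℝ}
    (hh : IntegrableOn h (Set.Ioi 0)) {ι : Type*} (s : Finset ι) (c : ι → ℝ) (e : ι → ℕ) :
    IntegrableOn (fun t => h t * ∑ i ∈ s, c i * lagFun a (e i) t) (Set.Ioi 0) := by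
  simp_rw [mul_sum, mul_left_comm (h _)]
  exact integrable_finsetSum _ fun i _ => (integrableOn_mul_lagFun ha hh (e i)).const_mul (c i)

theorem integral_mul_sum_lagFun {a : ℝ} (ha : 0 ≤ a) {h : ℝ → ℝ}
    (hh : IntegrableOn h (Set.Ioi 0)) {ι : Type*} (s : Finset ι) (c : ι → ℝ) (e : ι → ℕ) :
    ∫ t in Set.Ioi 0, h t * ∑ i ∈ s, c i * lagFun a (e i) t =
      ∑ i ∈ s, c i * lagCoeff a h (e i) := by
  simp_rw [mul_sum, mul_left_comm (h _)]
  rw [integral_finsetSum _ fun i _ => (integrableOn_mul_lagFun ha hh (e i)).const_mul (c i)]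
  simp_rw [integral_const_mul, lagCoeff]

theorem integral_mul_const_mul_sub_sum_lagFun {a : ℝ} (ha : 0 ≤ a) {h : ℝ → ℝ}
    (hh : IntegrableOn h (Set.Ioi 0)) {ι : Type*} (s s' : Finset ι) (c c' : ι → ℝ)
    (e e' : ι → ℕ) (C : ℝ) :
    ∫ t in Set.Ioi 0, h t *
        (C * (∑ i ∈ s, c i * lagFun a (e i) t - ∑ i ∈ s', c' i * lagFun a (e' i) t)) =
      C * (∑ i ∈ s, c i * lagCoeff a h (e i) - ∑ i ∈ s', c' i * lagCoeff a h (e' i)) := by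
  simp_rw [mul_left_comm (h _) C, mul_sub (h _)]
  rw [integral_const_mul, integral_sub (integrableOn_mul_sum_lagFun ha hh s c e)
    (integrableOn_mul_sum_lagFun ha hh s' c' e'), integral_mul_sum_lagFun ha hh,
    integral_mul_sum_lagFun ha hh]

theorem integral_Ioi_mul_lagFun_add {a : ℝ} (ha : 0 ≤ a) {g : ℝ → ℝ}
    (hg : IntegrableOn g (Set.Ioi 0)) (k : ℕ) (τ : ℝ) :
    ∫ s in Set.Ioi 0, g s * lagFun a k (s + τ) = (Real.sqrt (2 * a))⁻¹ *
      (∑ l ∈ range (k + 1), lagCoeff a g (k - l) * lagFun a l τ -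
        ∑ l ∈ range k, lagCoeff a g (k - 1 - l) * lagFun a l τ) := by
  simp_rw [lagFun_add a k _ τ]
  rw [integral_mul_const_mul_sub_sum_lagFun ha hg]
  simp_rw [mul_comm (lagFun a _ τ)]

theorem lagCoeff_conv {a : ℝ} (ha : 0 ≤ a) {f g : ℝ → ℝ} (hf : IntegrableOn f (Set.Ioi 0))
    (hg : IntegrableOn g (Set.Ioi 0)) (k : ℕ) :
    lagCoeff a (conv g f) k = (Real.sqrt (2 * a))⁻¹ *
      (∑ l ∈ range (k + 1), lagCoeff a g (k - l) * lagCoeff a f l -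
        ∑ l ∈ range k, lagCoeff a g (k - 1 - l) * lagCoeff a f l) := by
  rw [lagCoeff, integral_Ioi_conv_mul hf hg (continuous_lagFun a k).aestronglyMeasurable
    fun t ht => abs_lagFun_le ha (le_of_lt ht) k]
  simp_rw [integral_Ioi_mul_lagFun_add ha hg k]
  exact integral_mul_const_mul_sub_sum_lagFun ha hf _ _ _ _ (fun l => l) (fun l => l) _

theorem sum_range_toepCol_mul (a : ℝ) (g : ℝ → ℝ) (v : ℕ → ℝ) (k : ℕ) :
    ∑ l ∈ range (k + 1), toepCol a g (k - l) * v l = (Real.sqrt (2 * a))⁻¹ *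
      (lagCoeff a g 0 * v k +
        ∑ l ∈ range k, (lagCoeff a g (k - l) - lagCoeff a g (k - l - 1)) * v l) := by
  have hpos : ∀ l ∈ range k, toepCol a g (k - l) * v l =
      (Real.sqrt (2 * a))⁻¹ * ((lagCoeff a g (k - l) - lagCoeff a g (k - l - 1)) * v l) := by
    intro l hl
    rw [toepCol, if_neg (by simp only [mem_range] at hl; omega)]
    ring
  rw [sum_range_succ, sum_congr rfl hpos, ← mul_sum, Nat.sub_self, toepCol, if_pos rfl]
  ring

theorem Gmat_mulVec_apply (a : ℝ) (g : ℝ → ℝ) (v : ℕ → ℝ) {m : ℕ} (i : Fin m) :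
    (Gmat a g m *ᵥ fun j : Fin m => v j) i = ∑ l ∈ range (i + 1), toepCol a g (i - l) * v l := by
  simp only [mulVec, dotProduct, Gmat, of_apply, ite_mul, zero_mul]
  rw [Fin.sum_univ_eq_sum_range (fun j => if j ≤ (i : ℕ) then toepCol a g (i - j) * v j else 0),
    ← sum_filter]
  congr 1
  ext j
  simp only [mem_filter, mem_range]
  omega

end LapDeconv

open LapDeconv in
theorem laplace_convolution_laguerre_coeffs_general
    (a : ℝ) (ha : 0 < a) (f g : ℝ → ℝ)
    (hf1 : MeasureTheory.IntegrableOn f (Set.Ioi 0))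
    (hg1 : MeasureTheory.IntegrableOn g (Set.Ioi 0)) :
    (∀ k : ℕ, lagCoeff a (conv g f) k =
      (Real.sqrt (2 * a))⁻¹ * (lagCoeff a g 0 * lagCoeff a f k +
        ∑ l ∈ Finset.range k,
          (lagCoeff a g (k - l) - lagCoeff a g (k - l - 1)) * lagCoeff a f l)) ∧
    (∀ m : ℕ, 1 ≤ m →
      (fun i : Fin m => lagCoeff a (conv g f) (i : ℕ)) =
        (Gmat a g m).mulVec (fun i : Fin m => lagCoeff a f (i : ℕ))) := by
  have hcoeff := lagCoeff_conv ha.le hf1 hg1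
  refine ⟨fun k => by rw [hcoeff, sum_range_mul_sub_sum_range_mul], fun m _ => funext fun i => ?_⟩
  rw [Gmat_mulVec_apply, sum_range_toepCol_mul, hcoeff, sum_range_mul_sub_sum_range_mul]

open LapDeconv in
/-- Laguerre coefficients of a Laplace convolution: triangular Toeplitz system. -/
theorem laplace_convolution_laguerre_coeffs
    (a : ℝ) (ha : 0 < a) (f g : ℝ → ℝ)
    (hf1 : MeasureTheory.IntegrableOn f (Set.Ioi 0))
    (hf2 : MeasureTheory.MemLp f 2 (MeasureTheory.volume.restrict (Set.Ioi 0)))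
    (hg1 : MeasureTheory.IntegrableOn g (Set.Ioi 0))
    (hg2 : MeasureTheory.MemLp g 2 (MeasureTheory.volume.restrict (Set.Ioi 0))) :
    (∀ k : ℕ, lagCoeff a (conv g f) k =
      (Real.sqrt (2 * a))⁻¹ * (lagCoeff a g 0 * lagCoeff a f k +
        ∑ l ∈ Finset.range k,
          (lagCoeff a g (k - l) - lagCoeff a g (k - l - 1)) * lagCoeff a f l)) ∧
    (∀ m : ℕ, 1 ≤ m →
      (fun i : Fin m => lagCoeff a (conv g f) (i : ℕ)) =
        (Gmat a g m).mulVec (fun i : Fin m => lagCoeff a f (i : ℕ))) :=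
  laplace_convolution_laguerre_coeffs_general a ha f g hf1 hg1
end
end

section
/- For every a > 0, every t ≥ 0 and all integers k, j ≥ 0, the Laguerre functions satisfy the convolution identity ∫_0^t φ_k(x) φ_j(t−x) dx = (2a)^{−1/2} [ φ_{k+j}(t) − φ_{k+j+1}(t) ]. -/
/-!
Under the Borel transform `∑ cₙ Xⁿ ↦ ∑ cₙ xⁿ / n!`, the Beta integral
`∫₀ᵗ xᵖ/p! · (t - x)^q/q! dx = t^(p+q+1)/(p+q+1)!` turns Laplace convolution into
`P, Q ↦ X P Q`. Since `L_k` is the transform of `(1 - X)^k`, the convolution of `L_k` and `L_j`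
is the transform of `X (1 - X)^(k+j) = (1 - X)^(k+j) - (1 - X)^(k+j+1)`, i.e. `L_{k+j} - L_{k+j+1}`.
For the Laguerre functions the exponential factors multiply to `e^{-at}`, and the substitution
`y = 2ax` reduces the claim to this polynomial identity.
-/

open MeasureTheory Matrix Finset Filter Topology

noncomputable section

open Polynomial
open scoped Nat

namespace LapDeconv

theorem hasDerivAt_pow_succ_div_factorial (n : ℕ) (x : ℝ) :
    HasDerivAt (fun x : ℝ => x ^ (n + 1) / (n + 1)!) (x ^ n / n !) x := by
  refine ((hasDerivAt_pow (n + 1) x).div_const _).congr_deriv ?_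
  rw [Nat.factorial_succ]
  push_cast
  field_simp

theorem integral_pow_div_factorial_mul_sub_pow_div_factorial (p q : ℕ) (t : ℝ) :
    ∫ x in (0 : ℝ)..t, x ^ p / p ! * ((t - x) ^ q / q !) = t ^ (p + q + 1) / (p + q + 1)! := by
  induction q generalizing p with
  | zero =>
    simp only [pow_zero, Nat.factorial_zero, Nat.cast_one, div_one, mul_one, add_zero]
    rw [intervalIntegral.integral_eq_sub_of_hasDerivAt
      (fun x _ => hasDerivAt_pow_succ_div_factorial p x)
      ((by fun_prop : Continuous fun x : ℝ => x ^ p / p !).intervalIntegrable _ _)]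
    simp
  | succ q ih =>
    have hu : ∀ x ∈ Set.uIcc 0 t, HasDerivAt (fun x : ℝ => (t - x) ^ (q + 1) / (q + 1)!)
        (-((t - x) ^ q / q !)) x := fun x _ =>
      (hasDerivAt_pow_succ_div_factorial q (t - x)).comp_const_sub t x
    have hv : ∀ x ∈ Set.uIcc 0 t, HasDerivAt (fun x : ℝ => x ^ (p + 1) / (p + 1)!)
        (x ^ p / p !) x :=
      fun x _ => hasDerivAt_pow_succ_div_factorial p x
    -- integration by parts moves one power from `t - x` onto `x`
    have parts := intervalIntegral.integral_mul_deriv_eq_deriv_mul hu hv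
      (by apply Continuous.intervalIntegrable; fun_prop)
      (by apply Continuous.intervalIntegrable; fun_prop)
    simp only [sub_self, sub_zero, ne_eq, add_eq_zero, one_ne_zero, and_false,
      not_false_eq_true, zero_pow, zero_div, mul_zero, zero_mul, neg_mul,
      intervalIntegral.integral_neg, sub_neg_eq_add, zero_add,
      mul_comm ((t - _) ^ _ / _)] at parts
    rw [parts, ih, add_right_comm p, add_assoc p]

def borel : ℝ[X] →ₗ[ℝ] ℝ → ℝ :=
  lsum fun n => LinearMap.toSpanSingleton ℝ (ℝ → ℝ) fun x => x ^ n / n !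

theorem borel_monomial (n : ℕ) (c : ℝ) : borel (monomial n c) = fun x => c * (x ^ n / n !) := by
  ext x
  simp [borel, sum_monomial_index]

theorem continuous_borel (P : ℝ[X]) : Continuous (borel P) := by
  induction P using Polynomial.induction_on' with
  | add P Q hP hQ => simpa only [map_add] using hP.add hQ
  | monomial n c => rw [borel_monomial]; fun_prop

theorem intervalIntegrable_borel_mul_borel_sub (P Q : ℝ[X]) (t a b : ℝ) :
    IntervalIntegrable (fun x => borel P x * borel Q (t - x)) volume a b :=
  ((continuous_borel P).mul ((continuous_borel Q).comp (continuous_sub_left t))).intervalIntegrable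
    a b

theorem integral_borel_mul_borel_sub (P Q : ℝ[X]) (t : ℝ) :
    ∫ x in (0 : ℝ)..t, borel P x * borel Q (t - x) = borel (X * P * Q) t := by
  induction P using Polynomial.induction_on' with
  | add P₁ P₂ h₁ h₂ =>
    simp only [map_add, Pi.add_apply, add_mul, mul_add]
    rw [intervalIntegral.integral_add (intervalIntegrable_borel_mul_borel_sub _ _ _ _ _)
      (intervalIntegrable_borel_mul_borel_sub _ _ _ _ _), h₁, h₂]
  | monomial p c =>
    induction Q using Polynomial.induction_on' with
    | add Q₁ Q₂ h₁ h₂ =>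
      simp only [map_add, Pi.add_apply, mul_add]
      rw [intervalIntegral.integral_add (intervalIntegrable_borel_mul_borel_sub _ _ _ _ _)
        (intervalIntegrable_borel_mul_borel_sub _ _ _ _ _), h₁, h₂]
    | monomial q d =>
      have hmul : X * monomial p c * monomial q d = monomial (p + q + 1) (c * d) := by
        rw [X_mul_monomial, monomial_mul_monomial]; ring_nf
      simp only [hmul, borel_monomial]
      rw [← integral_pow_div_factorial_mul_sub_pow_div_factorial,
        ← intervalIntegral.integral_const_mul]
      exact intervalIntegral.integral_congr fun x _ => by ring

theorem laguerreL_eq_borel (k : ℕ) : laguerreL k = borel ((1 - X) ^ k) := by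
  have hbinom : (1 - X : ℝ[X]) ^ k =
      ∑ p ∈ range (k + 1), monomial p ((-1 : ℝ) ^ p * k.choose p) := by
    rw [sub_eq_neg_add, add_pow]
    refine Finset.sum_congr rfl fun p _ => ?_
    rw [← C_mul_X_pow_eq_monomial, neg_pow, C_mul, C_pow, C_neg, C_1, ← C_eq_natCast]
    ring
  funext x
  simp only [laguerreL, hbinom, map_sum, Finset.sum_apply, borel_monomial]
  exact Finset.sum_congr rfl fun p _ => by ring

theorem integral_laguerreL_mul_laguerreL_sub (k j : ℕ) (s : ℝ) :
    ∫ x in (0 : ℝ)..s, laguerreL k x * laguerreL j (s - x) =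
      laguerreL (k + j) s - laguerreL (k + j + 1) s := by
  have hpoly : X * (1 - X) ^ k * (1 - X) ^ j =
      (1 - X : ℝ[X]) ^ (k + j) - (1 - X) ^ (k + j + 1) := by
    ring
  simp only [laguerreL_eq_borel]
  rw [integral_borel_mul_borel_sub, hpoly, map_sub, Pi.sub_apply]

theorem lagFun_mul_lagFun_sub {a : ℝ} (ha : 0 ≤ a) (k j : ℕ) (t x : ℝ) :
    lagFun a k x * lagFun a j (t - x) = 2 * a * Real.exp (-(a * t)) *
      (laguerreL k (2 * a * x) * laguerreL j (2 * a * t - 2 * a * x)) := by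
  have hsqrt : √(2 * a) * √(2 * a) = 2 * a := Real.mul_self_sqrt (by positivity)
  have hexp : Real.exp (-(a * x)) * Real.exp (-(a * (t - x))) = Real.exp (-(a * t)) := by
    rw [← Real.exp_add]; ring_nf
  calc lagFun a k x * lagFun a j (t - x)
      = (√(2 * a) * √(2 * a)) * (Real.exp (-(a * x)) * Real.exp (-(a * (t - x)))) *
          (laguerreL k (2 * a * x) * laguerreL j (2 * a * (t - x))) := by
        simp only [lagFun]; ring
    _ = _ := by rw [hsqrt, hexp, mul_sub]

end LapDeconv

open LapDeconv in
theorem laguerre_convolution_identity_general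
    (a : ℝ) (ha : 0 < a) (t : ℝ) (k j : ℕ) :
    ∫ x in (0 : ℝ)..t, lagFun a k x * lagFun a j (t - x) =
      (Real.sqrt (2 * a))⁻¹ * (lagFun a (k + j) t - lagFun a (k + j + 1) t) := by
  have h2a : 2 * a ≠ 0 := by positivity
  have hscaled :
      ∫ x in (0 : ℝ)..t, laguerreL k (2 * a * x) * laguerreL j (2 * a * t - 2 * a * x) =
      (2 * a)⁻¹ * (laguerreL (k + j) (2 * a * t) - laguerreL (k + j + 1) (2 * a * t)) := by
    rw [intervalIntegral.integral_comp_mul_left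
      (fun y => laguerreL k y * laguerreL j (2 * a * t - y)) h2a, mul_zero,
      integral_laguerreL_mul_laguerreL_sub, smul_eq_mul]
  simp_rw [lagFun_mul_lagFun_sub ha.le]
  rw [intervalIntegral.integral_const_mul, hscaled]
  simp only [lagFun]
  field_simp

open LapDeconv in
/-- Convolution identity for Laguerre functions:
`∫_0^t φ_k(x) φ_j(t-x) dx = (2a)^{-1/2} [φ_{k+j}(t) - φ_{k+j+1}(t)]`. -/
theorem laguerre_convolution_identity
    (a : ℝ) (ha : 0 < a) (t : ℝ) (ht : 0 ≤ t) (k j : ℕ) :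
    ∫ x in (0 : ℝ)..t, lagFun a k x * lagFun a j (t - x) =
      (Real.sqrt (2 * a))⁻¹ * (lagFun a (k + j) t - lagFun a (k + j + 1) t) :=
  laguerre_convolution_identity_general a ha t k j
end
end

section
/- Let r ≥ 1 and let T_m(r) be the m×m lower triangular Toeplitz matrix with entries (T_m(r))_{i,j} = binom(r + (i−j) − 1, i−j) for i ≥ j and 0 otherwise (the finite Toeplitz matrix with symbol (1−z)^{−r} = ∑_{j≥0} binom(r+j−1, j) z^j). Then: (i) its squared Frobenius norm equals ∑_{j=0}^{m−1} binom(r+j−1, j)² (m−j) and satisfies ‖T_m(r)‖_F² ≤ m^{2r} for all m ≥ 1; (ii) there exists a constant c_r > 0 depending only on r such that the squared spectral norm satisfies ‖T_m(r)‖² ≥ c_r m^{2r} for all m ≥ 1. -/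
open MeasureTheory Matrix Finset Filter Topology

noncomputable section

open LapDeconv in
/-- The `m × m` lower triangular Toeplitz matrix with symbol `(1-z)^{-r}`. -/
noncomputable def toeplitzBinom (r m : ℕ) : Matrix (Fin m) (Fin m) ℝ :=
  Matrix.of fun i j => if (j : ℕ) ≤ (i : ℕ) then
    (Nat.choose (r + ((i : ℕ) - (j : ℕ)) - 1) ((i : ℕ) - (j : ℕ)) : ℝ) else 0

/-! An `m × m` lower triangular Toeplitz matrix has `m - d` entries on its `d`-th subdiagonal,
which gives the Frobenius formula; the bound follows from `binom(r+d-1, d) ≤ (d+1)^(r-1) ≤ m^(r-1)`.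
For the spectral norm, evaluate the Rayleigh quotient of `TᵀT` at the normalised all-ones vector:
by Cauchy–Schwarz it is at least `(∑ᵢⱼ Tᵢⱼ)² / m²`, and the hockey-stick identity, applied to the
rows and then to their sum, gives `∑ᵢⱼ Tᵢⱼ = binom(m+r, r+1) ≥ m^(r+1) / (r+1)!`. -/

section

open LapDeconv

variable {R : Type*}

def lowerToeplitz [Zero R] (a : ℕ → R) (m : ℕ) : Matrix (Fin m) (Fin m) R :=
  of fun i j => if (j : ℕ) ≤ i then a (i - j) else 0

theorem sum_range_sum_range_succ {M : Type*} [AddCommMonoid M] (f : ℕ → M) (m : ℕ) :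
    ∑ i ∈ range m, ∑ d ∈ range (i + 1), f d = ∑ d ∈ range m, (m - d) • f d := by
  have := Finset.sum_Ico_Ico_comm 0 m fun d _ => f d
  simp only [Finset.sum_const, Nat.card_Ico, ← Finset.range_eq_Ico] at this
  exact this.symm

theorem sum_lowerToeplitz_row [AddCommMonoid R] (a : ℕ → R) {m : ℕ} (i : Fin m) :
    ∑ j, lowerToeplitz a m i j = ∑ d ∈ range (i + 1), a d := by
  have hrow : (range m).filter (· ≤ (i : ℕ)) = range (i + 1) := by
    ext j; simp only [mem_filter, mem_range]; omega
  simp only [lowerToeplitz, of_apply]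
  rw [Fin.sum_univ_eq_sum_range (fun j => if j ≤ (i : ℕ) then a (i - j) else 0),
    ← Finset.sum_filter, hrow, ← Finset.sum_range_reflect]
  refine Finset.sum_congr rfl fun d hd => ?_
  rw [mem_range] at hd
  congr 1; omega

theorem sum_lowerToeplitz [AddCommMonoid R] (a : ℕ → R) (m : ℕ) :
    ∑ i, ∑ j, lowerToeplitz a m i j = ∑ d ∈ range m, (m - d) • a d := by
  simp only [sum_lowerToeplitz_row]
  rw [Fin.sum_univ_eq_sum_range (fun i => ∑ d ∈ range (i + 1), a d), sum_range_sum_range_succ]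

theorem frobSq_eq_sum_sq {k l : ℕ} (B : Matrix (Fin k) (Fin l) ℝ) :
    frobSq B = ∑ i, ∑ j, B i j ^ 2 := by
  simp only [frobSq, trace, Matrix.diag, mul_apply, transpose_apply, sq]
  exact Finset.sum_comm

theorem frobSq_lowerToeplitz (a : ℕ → ℝ) (m : ℕ) :
    frobSq (lowerToeplitz a m) = ∑ d ∈ range m, a d ^ 2 * (m - d : ℕ) := by
  have hsq : ∀ i j, lowerToeplitz a m i j ^ 2 = lowerToeplitz (a · ^ 2) m i j := by
    intro i j
    simp only [lowerToeplitz, of_apply]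
    split_ifs <;> simp
  simp only [frobSq_eq_sum_sq, hsq, sum_lowerToeplitz, nsmul_eq_mul, mul_comm]

theorem bddAbove_rayleigh {N : ℕ} (B : Matrix (Fin N) (Fin N) ℝ) :
    BddAbove {r : ℝ | ∃ v : Fin N → ℝ, (∑ i, v i ^ 2) = 1 ∧ r = v ⬝ᵥ B.mulVec v} := by
  refine ⟨∑ i, ∑ j, |B i j|, ?_⟩
  rintro x ⟨v, hv, rfl⟩
  have hv_le : ∀ i, |v i| ≤ 1 := fun i => by
    rw [← abs_one, ← sq_le_sq, one_pow, ← hv]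
    exact Finset.single_le_sum (fun k _ => sq_nonneg (v k)) (Finset.mem_univ i)
  simp only [dotProduct, mulVec, Finset.mul_sum]
  refine Finset.sum_le_sum fun i _ => Finset.sum_le_sum fun j _ => ?_
  calc v i * (B i j * v j) ≤ |v i| * (|B i j| * |v j|) := by
        rw [← abs_mul, ← abs_mul]; exact le_abs_self _
    _ ≤ 1 * (|B i j| * 1) := by gcongr <;> exact hv_le _
    _ = |B i j| := by ring

theorem rayleigh_le_lambdaMax {N : ℕ} (B : Matrix (Fin N) (Fin N) ℝ) {v : Fin N → ℝ}
    (hv : ∑ i, v i ^ 2 = 1) : v ⬝ᵥ B *ᵥ v ≤ lambdaMax B :=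
  le_csSup (bddAbove_rayleigh B) ⟨v, hv, rfl⟩

theorem sq_sum_le_lambdaMax_transpose_mul {k N : ℕ} (B : Matrix (Fin k) (Fin N) ℝ) :
    (∑ i, ∑ j, B i j) ^ 2 ≤ k * N * lambdaMax (Bᵀ * B) := by
  rcases Nat.eq_zero_or_pos N with rfl | hN
  · simp
  set v : Fin N → ℝ := fun _ => (Real.sqrt N)⁻¹
  have hsqrt : Real.sqrt N ^ 2 = N := Real.sq_sqrt (Nat.cast_nonneg N)
  have hv : ∑ i, v i ^ 2 = 1 := by
    simp only [v, Finset.sum_const, Finset.card_univ, Fintype.card_fin, nsmul_eq_mul, inv_pow,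
      hsqrt]
    field_simp
  have hBv : ∀ i, (B *ᵥ v) i = (∑ j, B i j) * (Real.sqrt N)⁻¹ := fun i => by
    simp only [mulVec, dotProduct, v, Finset.sum_mul]
  have hquad : v ⬝ᵥ (Bᵀ * B) *ᵥ v = (N : ℝ)⁻¹ * ∑ i, (∑ j, B i j) ^ 2 := by
    rw [← mulVec_mulVec, mulVec_transpose, dotProduct_comm, ← dotProduct_mulVec]
    simp only [dotProduct, hBv, Finset.mul_sum]
    refine Finset.sum_congr rfl fun i _ => ?_
    rw [show (N : ℝ)⁻¹ = (Real.sqrt N)⁻¹ ^ 2 by rw [inv_pow, hsqrt]]; ring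
  calc (∑ i, ∑ j, B i j) ^ 2 ≤ k * ∑ i, (∑ j, B i j) ^ 2 := by
        simpa using sq_sum_le_card_mul_sum_sq (s := Finset.univ) (f := fun i => ∑ j, B i j)
    _ = k * N * (v ⬝ᵥ (Bᵀ * B) *ᵥ v) := by
        rw [hquad]; field_simp
    _ ≤ k * N * lambdaMax (Bᵀ * B) := by
        gcongr; exact rayleigh_le_lambdaMax _ hv

theorem toeplitzBinom_eq_lowerToeplitz (r m : ℕ) :
    toeplitzBinom r m = lowerToeplitz (fun d => ((r + d - 1).choose d : ℝ)) m :=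
  rfl

theorem choose_add_sub_one_eq {r : ℕ} (hr : 1 ≤ r) (d : ℕ) :
    (r + d - 1).choose d = (d + (r - 1)).choose (r - 1) := by
  rw [show r + d - 1 = d + (r - 1) by omega, Nat.choose_symm_add]

theorem frobSq_toeplitzBinom_le {r : ℕ} (hr : 1 ≤ r) (m : ℕ) :
    frobSq (toeplitzBinom r m) ≤ (m : ℝ) ^ (2 * r) := by
  rw [toeplitzBinom_eq_lowerToeplitz, frobSq_lowerToeplitz]
  have hterm : ∀ d ∈ range m,
      ((r + d - 1).choose d : ℝ) ^ 2 * (m - d : ℕ) ≤ (m : ℝ) ^ (2 * r - 1) := by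
    intro d hd
    have hchoose : (r + d - 1).choose d ≤ m ^ (r - 1) := calc
      _ = (d + (r - 1)).choose (r - 1) := choose_add_sub_one_eq hr d
      _ ≤ (d + 1) ^ (r - 1) := Nat.choose_add_le_add_one_pow d (r - 1)
      _ ≤ m ^ (r - 1) := Nat.pow_le_pow_left (mem_range.1 hd) _
    calc ((r + d - 1).choose d : ℝ) ^ 2 * (m - d : ℕ) ≤ ((m : ℝ) ^ (r - 1)) ^ 2 * m := by
          gcongr
          · exact_mod_cast hchoose
          · exact_mod_cast Nat.sub_le m d
      _ = (m : ℝ) ^ (2 * r - 1) := by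
          rw [← pow_mul, ← pow_succ]; congr 1; omega
  calc _ ≤ ∑ _ ∈ range m, (m : ℝ) ^ (2 * r - 1) := sum_le_sum hterm
    _ = (m : ℝ) ^ (2 * r) := by
        rw [sum_const, card_range, nsmul_eq_mul, ← pow_succ']; congr 1; omega

theorem sum_toeplitzBinom_row {r : ℕ} (hr : 1 ≤ r) {m : ℕ} (i : Fin m) :
    ∑ j, toeplitzBinom r m i j = ((i + r).choose r : ℝ) := by
  rw [toeplitzBinom_eq_lowerToeplitz, sum_lowerToeplitz_row]
  simp only [choose_add_sub_one_eq hr]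
  rw_mod_cast [Nat.sum_range_add_choose]
  congr 1 <;> omega

theorem sum_toeplitzBinom {r : ℕ} (hr : 1 ≤ r) (m : ℕ) :
    ∑ i, ∑ j, toeplitzBinom r m i j = ((m + r).choose (r + 1) : ℝ) := by
  simp only [sum_toeplitzBinom_row hr]
  rw [Fin.sum_univ_eq_sum_range (fun i => ((i + r).choose r : ℝ))]
  rcases m with _ | n
  · simp
  · rw_mod_cast [Nat.sum_range_add_choose]
    congr 1; omega

theorem pow_div_factorial_sq_le_lambdaMax_toeplitzBinom {r : ℕ} (hr : 1 ≤ r) {m : ℕ}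
    (hm : 1 ≤ m) : (m : ℝ) ^ (2 * r) / ((r + 1).factorial : ℝ) ^ 2 ≤
      lambdaMax ((toeplitzBinom r m)ᵀ * toeplitzBinom r m) := by
  have hsum : (m : ℝ) ^ (r + 1) / (r + 1).factorial ≤ ∑ i, ∑ j, toeplitzBinom r m i j := by
    rw [sum_toeplitzBinom hr]
    simpa using Nat.pow_le_choose (α := ℝ) (r + 1) (m + r)
  have hm0 : (0 : ℝ) < m := by exact_mod_cast hm
  calc (m : ℝ) ^ (2 * r) / ((r + 1).factorial : ℝ) ^ 2
        = ((m : ℝ) ^ (r + 1) / (r + 1).factorial) ^ 2 / (m * m) := by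
          field_simp; ring
    _ ≤ (∑ i, ∑ j, toeplitzBinom r m i j) ^ 2 / (m * m) := by gcongr
    _ ≤ lambdaMax ((toeplitzBinom r m)ᵀ * toeplitzBinom r m) := by
          rw [div_le_iff₀ (by positivity)]
          linarith [sq_sum_le_lambdaMax_transpose_mul (toeplitzBinom r m)]

end

open LapDeconv in
/-- Frobenius-norm formula and bound, and spectral-norm lower bound, for the
triangular Toeplitz matrix with symbol `(1-z)^{-r}`. -/
theorem toeplitz_binom_norms (r : ℕ) (hr : 1 ≤ r) :
    (∀ m : ℕ, frobSq (toeplitzBinom r m) =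
      ∑ j ∈ Finset.range m, (Nat.choose (r + j - 1) j : ℝ) ^ 2 * ((m - j : ℕ) : ℝ)) ∧
    (∀ m : ℕ, 1 ≤ m → frobSq (toeplitzBinom r m) ≤ (m : ℝ) ^ (2 * r)) ∧
    (∃ c : ℝ, 0 < c ∧ ∀ m : ℕ, 1 ≤ m →
      c * (m : ℝ) ^ (2 * r) ≤ lambdaMax ((toeplitzBinom r m)ᵀ * toeplitzBinom r m)) := by
  refine ⟨fun m => by rw [toeplitzBinom_eq_lowerToeplitz, frobSq_lowerToeplitz],
    fun m _ => frobSq_toeplitzBinom_le hr m, ((r + 1).factorial ^ 2 : ℝ)⁻¹, by positivity,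
    fun m hm => ?_⟩
  rw [inv_mul_eq_div]
  exact pow_div_factorial_sq_le_lambdaMax_toeplitzBinom hr hm
end
end

section
/- For every a > 0, every integer k ≥ 0, and every real ω, the Fourier transform of the Laguerre function satisfies ∫_0^∞ e^{iωx} φ_k(x) dx = (−1)^k √(2a) (a + iω)^k / (a − iω)^{k+1}. -/
open MeasureTheory Matrix Finset Filter Topology

noncomputable section

/-!
With `c = a - iω` (so `Re c = a > 0`), `e^{iωx} φ_k(x) = √(2a) L_k(2ax) e^{-cx}`, so the integral
is `√(2a)` times the Laplace transform of `L_k(2a ·)` at `c`. Expanding `L_k` and integrating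
termwise with `∫₀^∞ x^j e^{-cx} dx = j!/c^{j+1}` (integration by parts), the factorials cancel and
the binomial theorem sums `∑_j (k choose j) (-2a)^j / c^{j+1}` to `(c - 2a)^k / c^{k+1}`, where
`c - 2a = -(a + iω)`.
-/

section LaplaceMoments

lemma hasDerivAt_cexp_neg_mul_ofReal (c : ℂ) (x : ℝ) :
    HasDerivAt (fun x : ℝ => Complex.exp (-(c * x))) (-c * Complex.exp (-(c * x))) x := by
  have h : HasDerivAt (fun x : ℝ => -(c * (x : ℂ))) (-c) x := by
    simpa [Pi.neg_def] using ((Complex.ofRealCLM.hasDerivAt (x := x)).const_mul c).neg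
  simpa [mul_comm] using h.cexp

variable {c : ℂ}

lemma norm_pow_mul_cexp_neg_mul {x : ℝ} (hx : 0 ≤ x) (j : ℕ) :
    ‖(x : ℂ) ^ j * Complex.exp (-(c * x))‖ = x ^ j * Real.exp (-c.re * x) := by
  simp [Complex.norm_exp, abs_of_nonneg hx]

lemma integrableOn_pow_mul_cexp_neg_mul_Ioi (hc : 0 < c.re) (j : ℕ) :
    IntegrableOn (fun x : ℝ => (x : ℂ) ^ j * Complex.exp (-(c * x))) (Set.Ioi 0) := by
  have hreal : IntegrableOn (fun x : ℝ => x ^ j * Real.exp (-c.re * x)) (Set.Ioi 0) := by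
    simpa [Real.rpow_natCast] using integrableOn_rpow_mul_exp_neg_mul_rpow (p := 1)
      (s := j) (by linarith [(Nat.cast_nonneg j : (0 : ℝ) ≤ j)]) one_pos hc
  refine hreal.mono' (by fun_prop) ?_
  filter_upwards [ae_restrict_mem measurableSet_Ioi] with x hx
  exact (norm_pow_mul_cexp_neg_mul (le_of_lt hx) j).le

lemma tendsto_pow_mul_cexp_neg_mul_atTop (hc : 0 < c.re) (j : ℕ) :
    Tendsto (fun x : ℝ => (x : ℂ) ^ j * Complex.exp (-(c * x))) atTop (𝓝 0) := by
  rw [tendsto_zero_iff_norm_tendsto_zero]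
  refine (tendsto_rpow_mul_exp_neg_mul_atTop_nhds_zero j c.re hc).congr' ?_
  filter_upwards [eventually_ge_atTop 0] with x hx
  rw [norm_pow_mul_cexp_neg_mul hx, Real.rpow_natCast]

lemma integral_pow_succ_mul_cexp_neg_mul_Ioi (hc : 0 < c.re) (j : ℕ) :
    ∫ x in Set.Ioi (0 : ℝ), (x : ℂ) ^ (j + 1) * Complex.exp (-(c * x)) =
      (j + 1) / c * ∫ x in Set.Ioi (0 : ℝ), (x : ℂ) ^ j * Complex.exp (-(c * x)) := by
  have hc0 : c ≠ 0 := fun h => by simp [h] at hc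
  have hu (x : ℝ) : HasDerivAt (fun x : ℝ => (x : ℂ) ^ (j + 1)) ((j + 1) * (x : ℂ) ^ j) x := by
    simpa using (hasDerivAt_pow (j + 1) (x : ℂ)).comp_ofReal
  have hv (x : ℝ) : HasDerivAt (fun x : ℝ => -Complex.exp (-(c * x)) / c)
      (Complex.exp (-(c * x))) x := by
    simpa [hc0] using (hasDerivAt_cexp_neg_mul_ofReal c x).neg.div_const c
  have hboundary : ∀ x : ℝ, (x : ℂ) ^ (j + 1) * (-Complex.exp (-(c * x)) / c) =
      -c⁻¹ * ((x : ℂ) ^ (j + 1) * Complex.exp (-(c * x))) := fun x => by ring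
  have hu'v : ∀ x : ℝ, (j + 1) * (x : ℂ) ^ j * (-Complex.exp (-(c * x)) / c) =
      -((j + 1) / c) * ((x : ℂ) ^ j * Complex.exp (-(c * x))) := fun x => by ring
  have h_zero : Tendsto (fun x : ℝ => (x : ℂ) ^ (j + 1) * (-Complex.exp (-(c * x)) / c))
      (𝓝[>] 0) (𝓝 0) := by
    have hcont : Continuous (fun x : ℝ => (x : ℂ) ^ (j + 1) * (-Complex.exp (-(c * x)) / c)) := by
      fun_prop
    simpa using hcont.continuousWithinAt.tendsto (x := 0) (s := Set.Ioi 0)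
  have h_infty : Tendsto (fun x : ℝ => (x : ℂ) ^ (j + 1) * (-Complex.exp (-(c * x)) / c))
      atTop (𝓝 0) := by
    simpa [hboundary] using (tendsto_pow_mul_cexp_neg_mul_atTop hc (j + 1)).const_mul (-c⁻¹)
  rw [integral_Ioi_mul_deriv_eq_deriv_mul (fun x _ => hu x) (fun x _ => hv x)
    (integrableOn_pow_mul_cexp_neg_mul_Ioi hc (j + 1))
    (IntegrableOn.congr_fun ((integrableOn_pow_mul_cexp_neg_mul_Ioi hc j).const_mul _)
      (fun x _ => (hu'v x).symm) measurableSet_Ioi)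
    h_zero h_infty]
  simp only [hu'v, integral_const_mul]
  ring

lemma integral_pow_mul_cexp_neg_mul_Ioi (hc : 0 < c.re) (j : ℕ) :
    ∫ x in Set.Ioi (0 : ℝ), (x : ℂ) ^ j * Complex.exp (-(c * x)) = j.factorial / c ^ (j + 1) := by
  have hc0 : c ≠ 0 := fun h => by simp [h] at hc
  induction j with
  | zero =>
    have h := integral_exp_mul_complex_Ioi (a := -c) (by simpa using hc) 0
    simp only [neg_mul, Complex.ofReal_zero, mul_zero, Complex.exp_zero] at h
    simp [h]
  | succ j ih =>
    rw [integral_pow_succ_mul_cexp_neg_mul_Ioi hc, ih, Nat.factorial_succ]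
    push_cast
    field_simp
    ring

end LaplaceMoments

lemma sum_choose_mul_neg_pow_div_pow {c : ℂ} (hc : c ≠ 0) (b : ℂ) (k : ℕ) :
    ∑ j ∈ range (k + 1), (k.choose j : ℂ) * (-b) ^ j / c ^ (j + 1) = (c - b) ^ k / c ^ (k + 1) := by
  rw [sub_eq_neg_add, add_pow, sum_div]
  refine sum_congr rfl fun j hj => ?_
  have hsplit : c ^ (k + 1) = c ^ (k - j) * c ^ (j + 1) := by
    rw [← pow_add]; congr 1; have := mem_range.mp hj; omega
  rw [hsplit]
  field_simp

namespace LapDeconv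

lemma laguerreL_mul_cexp_eq_sum (k : ℕ) (b x : ℝ) (c : ℂ) :
    (laguerreL k (b * x) : ℂ) * Complex.exp (-(c * x)) =
      ∑ j ∈ range (k + 1), (-1) ^ j * k.choose j * (b : ℂ) ^ j / j.factorial *
        ((x : ℂ) ^ j * Complex.exp (-(c * x))) := by
  simp only [laguerreL]
  push_cast
  rw [sum_mul]
  refine sum_congr rfl fun j _ => ?_
  ring

lemma integral_laguerreL_mul_cexp_neg_mul_Ioi {c : ℂ} (hc : 0 < c.re) (b : ℝ) (k : ℕ) :
    ∫ x in Set.Ioi (0 : ℝ), (laguerreL k (b * x) : ℂ) * Complex.exp (-(c * x)) =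
      (c - b) ^ k / c ^ (k + 1) := by
  have hc0 : c ≠ 0 := fun h => by simp [h] at hc
  simp_rw [laguerreL_mul_cexp_eq_sum]
  rw [integral_finsetSum _ fun j _ => (integrableOn_pow_mul_cexp_neg_mul_Ioi hc j).const_mul _]
  simp only [integral_const_mul, integral_pow_mul_cexp_neg_mul_Ioi hc]
  rw [← sum_choose_mul_neg_pow_div_pow hc0]
  refine sum_congr rfl fun j _ => ?_
  have hfac : (j.factorial : ℂ) ≠ 0 := by exact_mod_cast j.factorial_ne_zero
  field_simp
  ring

end LapDeconv

open LapDeconv in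
/-- Fourier transform of the Laguerre function:
`∫_0^∞ e^{iωx} φ_k(x) dx = (-1)^k √(2a) (a + iω)^k / (a - iω)^{k+1}`. -/
theorem fourier_transform_laguerre
    (a : ℝ) (ha : 0 < a) (k : ℕ) (ω : ℝ) :
    ∫ x in Set.Ioi (0 : ℝ), Complex.exp (Complex.I * ω * x) * (lagFun a k x : ℂ) =
      (-1 : ℂ) ^ k * (Real.sqrt (2 * a) : ℂ) *
        ((a : ℂ) + Complex.I * ω) ^ k / ((a : ℂ) - Complex.I * ω) ^ (k + 1) := by
  set c : ℂ := a - Complex.I * ω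
  have hc : 0 < c.re := by simpa [c] using ha
  have hintegrand (x : ℝ) : Complex.exp (Complex.I * ω * x) * (lagFun a k x : ℂ) =
      Real.sqrt (2 * a) * ((laguerreL k (2 * a * x) : ℂ) * Complex.exp (-(c * x))) := by
    have hexp : Complex.exp (Complex.I * ω * x) * Complex.exp (-(a * x)) =
        Complex.exp (-(c * x)) := by
      rw [← Complex.exp_add]; congr 1; simp only [c]; ring
    simp only [lagFun]
    push_cast
    rw [← hexp]
    ring
  have hshift : c - (2 * a : ℝ) = -(a + Complex.I * ω) := by push_cast [c]; ring
  simp_rw [hintegrand]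
  rw [integral_const_mul, integral_laguerreL_mul_cexp_neg_mul_Ioi hc, hshift, neg_pow]
  ring
end
end
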